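/- For every α ∈ ℕ and every real t, the Taylor series of the Hermite function h_α about 0 converges absolutely to h_α(t); explicitly, h_α(t) = Σ_{β=0}^∞ ((−t)^β/β!)·He_{α+β}(0). -/

import Mathlib

/-!
Extend `h α` to the entire function `z ↦ exp (-z²/2) He_α(z)`. The recursion
`He_{n+1} = x He_n - He_n'` says exactly that `h_n' = -h_{n+1}`, so the `β`-th derivative of
`h_α` at `0` is `(-1)^β He_{α+β}(0)`. The Taylor series of an entire function converges to the
function everywhere, and absolutely: Cauchy's estimate on the circle of radius `|z - c| + 1`
dominates its terms by a geometric series.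
-/

noncomputable def He (n : ℕ) (x : ℝ) : ℝ := Polynomial.aeval x (Polynomial.hermite n)

noncomputable def hermiteFun (n : ℕ) (x : ℝ) : ℝ := Real.exp (-x ^ 2 / 2) * He n x

open Polynomial Nat

namespace Complex

variable {E : Type*} [NormedAddCommGroup E] [NormedSpace ℂ E] [CompleteSpace E]

theorem summable_norm_taylorSeries_of_entire {f : ℂ → E} (hf : Differentiable ℂ f)
    (c z : ℂ) :
    Summable (fun n : ℕ ↦ ‖(n ! : ℂ)⁻¹ • (z - c) ^ n • iteratedDeriv n f c‖) := by
  set R := ‖z - c‖ + 1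
  have hR : 0 < R := by positivity
  obtain ⟨C, hC⟩ :=
    (isCompact_sphere c R).exists_bound_of_continuousOn hf.continuous.continuousOn
  refine .of_nonneg_of_le (fun _ ↦ norm_nonneg _) (fun n ↦ ?_)
    ((summable_geometric_of_lt_one (by positivity) ((div_lt_one hR).2 (lt_add_one _))).mul_left C)
  calc ‖(n ! : ℂ)⁻¹ • (z - c) ^ n • iteratedDeriv n f c‖
      = (n ! : ℝ)⁻¹ * ‖z - c‖ ^ n * ‖iteratedDeriv n f c‖ := by
        simp [norm_smul, mul_assoc]
    _ ≤ (n ! : ℝ)⁻¹ * ‖z - c‖ ^ n * (n ! * C / R ^ n) := by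
        gcongr
        exact norm_iteratedDeriv_le_of_forall_mem_sphere_norm_le n hR hf.diffContOnCl hC
    _ = C * (‖z - c‖ / R) ^ n := by
        rw [div_pow]
        field_simp

end Complex

noncomputable def complexHermiteFun (n : ℕ) (z : ℂ) : ℂ :=
  Complex.exp (-z ^ 2 / 2) * aeval z (hermite n)

theorem complexHermiteFun_ofReal (n : ℕ) (x : ℝ) : complexHermiteFun n x = hermiteFun n x := by
  have hHe : aeval (x : ℂ) (hermite n) = He n x := by
    simpa only [He, Complex.coe_algebraMap] using aeval_algebraMap_apply ℂ x (hermite n)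
  rw [complexHermiteFun, hHe, hermiteFun]
  push_cast
  rfl

theorem hasDerivAt_complexHermiteFun (n : ℕ) (z : ℂ) :
    HasDerivAt (complexHermiteFun n) (-complexHermiteFun (n + 1) z) z := by
  have hexp : HasDerivAt (fun w : ℂ ↦ Complex.exp (-w ^ 2 / 2))
      (Complex.exp (-z ^ 2 / 2) * -z) z :=
    ((hasDerivAt_pow 2 z).fun_neg.div_const 2).cexp.congr_deriv (by ring)
  refine (hexp.fun_mul (Polynomial.hasDerivAt_aeval (hermite n) z)).congr_deriv ?_
  simp only [complexHermiteFun, hermite_succ, map_sub, map_mul, aeval_X]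
  ring

theorem differentiable_complexHermiteFun (n : ℕ) : Differentiable ℂ (complexHermiteFun n) :=
  fun z ↦ (hasDerivAt_complexHermiteFun n z).differentiableAt

theorem iteratedDeriv_complexHermiteFun (n k : ℕ) :
    iteratedDeriv k (complexHermiteFun n) = fun z ↦ (-1) ^ k * complexHermiteFun (n + k) z := by
  induction k generalizing n with
  | zero => simp
  | succ k ih =>
    have hderiv : deriv (complexHermiteFun n) = fun z ↦ -complexHermiteFun (n + 1) z :=
      funext fun z ↦ (hasDerivAt_complexHermiteFun n z).deriv
    funext z
    rw [iteratedDeriv_succ', hderiv, iteratedDeriv_fun_neg, ih, pow_succ, add_right_comm, add_assoc]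
    ring

theorem complexHermiteFun_zero (n : ℕ) : complexHermiteFun n 0 = He n 0 := by
  simpa [hermiteFun] using complexHermiteFun_ofReal n 0

theorem complexHermiteFun_taylorTerm (α β : ℕ) (t : ℝ) :
    (β ! : ℂ)⁻¹ • (t : ℂ) ^ β • iteratedDeriv β (complexHermiteFun α) 0
      = (((-t) ^ β / β ! * He (α + β) 0 : ℝ) : ℂ) := by
  simp only [iteratedDeriv_complexHermiteFun, complexHermiteFun_zero, smul_eq_mul]
  push_cast
  ring

theorem hermiteFun_taylor_series (α : ℕ) (t : ℝ) :
    Summable (fun β : ℕ => |(-t) ^ β / (β.factorial : ℝ) * He (α + β) 0|) ∧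
    HasSum (fun β : ℕ => (-t) ^ β / (β.factorial : ℝ) * He (α + β) 0)
      (hermiteFun α t) := by
  have hf := differentiable_complexHermiteFun α
  constructor
  · simpa only [sub_zero, complexHermiteFun_taylorTerm, Complex.norm_real, Real.norm_eq_abs] using
      Complex.summable_norm_taylorSeries_of_entire hf 0 t
  · rw [← Complex.hasSum_ofReal, ← complexHermiteFun_ofReal]
    simpa only [sub_zero, complexHermiteFun_taylorTerm] using
      Complex.hasSum_taylorSeries_of_entire hf 0 t
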